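/- arXiv:2102.05324 — 2 statements merged into one kernel-verified Lean document; each statement's English description precedes it below -/
import Mathlib

section
/- Let K be a complete discretely valued field and f an endomorphism of a finite-dimensional K-vector space V. For a real number s, factor the characteristic polynomial χ_f = χ_Big · χ_Small, where χ_Big gathers the roots (in an algebraic closure) of valuation < s and χ_Small those of valuation ≥ s. Then both factors have coefficients in K, and V decomposes as the direct sum V = ker(χ_Big(f)) ⊕ ker(χ_Small(f)). -/
/-!
Over a complete field the valuation extends uniquely to any algebraic extension (it is the
spectral norm), so roots with the same minimal polynomial have the same valuation. Hence the
condition `ρ ≠ 0 ∧ v(ρ) < s` is constant on the roots of each monic irreducible factor of `χ_f`,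
and grouping these factors accordingly gives `χ_f = χ_Big * χ_Small` over `K`. The two factors
have no common root, so they are coprime, and since `χ_f(f) = 0` the kernels of `χ_Big(f)` and
`χ_Small(f)` are complementary.
-/

open scoped NNReal

/-- `π` is a uniformizer of the complete discretely valued field `K`. -/
def IsUniformizer (K : Type*) [Field K] [Valued K ℝ≥0] (π : K) : Prop :=
  Valued.v π ≠ 0 ∧ Valued.v π < 1 ∧ ∀ x : K, x ≠ 0 → ∃ k : ℤ, Valued.v x = Valued.v π ^ k

/-- The (additive, ℝ-valued) valuation associated to a multiplicative `ℝ≥0`-valuation `w`,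
normalized so that the uniformizer `π` has valuation `1`. -/
noncomputable def addValOf {K : Type*} [Field K] [Valued K ℝ≥0] (π : K)
    {A : Type*} [Ring A] (w : Valuation A ℝ≥0) (x : A) : ℝ :=
  Real.logb ((Valued.v π : ℝ≥0) : ℝ) ((w x : ℝ≥0) : ℝ)

open Polynomial

theorem Valuation.eq_of_minpoly_eq {K : Type*} [Field K] [Valued K ℝ≥0] [CompleteSpace K]
    [(Valued.v : Valuation K ℝ≥0).IsNontrivial]
    {L : Type*} [Field L] [Algebra K L] [Algebra.IsAlgebraic K L]
    (w : Valuation L ℝ≥0) (hw : ∀ x : K, w (algebraMap K L x) = Valued.v x)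
    {x y : L} (hxy : minpoly K x = minpoly K y) : w x = w y := by
  let : (Valued.v : Valuation K ℝ≥0).RankOne :=
    { hom' := MonoidWithZeroHom.ValueGroup₀.embedding
      strictMono' := MonoidWithZeroHom.ValueGroup₀.embedding_strictMono }
  let := Valued.toNontriviallyNormedField K ℝ≥0
  let absW : AbsoluteValue L ℝ :=
    { toFun := fun z => (w z : ℝ)
      map_mul' := fun a b => by simp
      nonneg' := fun a => (w a).2
      eq_zero' := fun a => by simp
      add_le' := fun a b => by
        exact_mod_cast (w.map_add a b).trans (max_le_add_of_nonneg bot_le bot_le) }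
  have h_spectral (z : L) : (w z : ℝ) = spectralNorm K L z :=
    spectralNorm_unique_field_norm_ext (f := absW) (fun c => by
      change (w _ : ℝ) = _
      -- the norm of `Valued.toNormedField` is `v` read through the embedding of its value group
      rw [hw]
      exact congrArg NNReal.toReal (Valuation.embedding_restrict _ c).symm) z
  exact NNReal.coe_injective <| by rw [h_spectral x, h_spectral y, spectralNorm, spectralNorm, hxy]

section
variable {K L : Type*} [Field K] [Field L] [Algebra K L]

theorem Polynomial.Monic.exists_mul_eq_of_minpoly_invariant {p : K[X]} (hp : p.Monic)
    (Q : L → Prop) (hQ : ∀ x y : L, minpoly K x = minpoly K y → Q x → Q y) :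
    ∃ q r : K[X], q.Monic ∧ r.Monic ∧ p = q * r ∧
      (∀ x ∈ q.aroots L, Q x) ∧ (∀ x ∈ r.aroots L, ¬ Q x) := by
  classical
  set F := UniqueFactorizationMonoid.normalizedFactors p
  have hF_prod : F.prod = p := by
    rw [UniqueFactorizationMonoid.prod_normalizedFactors_eq hp.ne_zero, hp.normalize_eq_self]
  have hF_irred_monic {g} (hg : g ∈ F) : Irreducible g ∧ g.Monic :=
    ((Polynomial.mem_normalizedFactors_iff hp.ne_zero).mp hg).imp_right And.left
  have h_monic {t : Multiset K[X]} (ht : t ≤ F) : t.prod.Monic := by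
    simpa using monic_multiset_prod_of_monic t id fun g hg =>
      (hF_irred_monic (Multiset.subset_of_le ht hg)).2
  have h_minpoly {t : Multiset K[X]} (ht : t ≤ F) {x : L} (hx : x ∈ t.prod.aroots L) :
      ∃ g ∈ t, minpoly K x = g := by
    have hx0 : aeval x t.prod = 0 := (mem_aroots.mp hx).2
    rw [map_multiset_prod, Multiset.prod_eq_zero_iff, Multiset.mem_map] at hx0
    obtain ⟨g, hg, hgx⟩ := hx0
    obtain ⟨hg_irred, hg_monic⟩ := hF_irred_monic (Multiset.subset_of_le ht hg)
    exact ⟨g, hg, (minpoly.eq_of_irreducible_of_monic hg_irred hgx hg_monic).symm⟩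
  let P : K[X] → Prop := fun g => ∃ x : L, minpoly K x = g ∧ Q x
  refine ⟨(F.filter P).prod, (F.filter (¬ P ·)).prod,
    h_monic (Multiset.filter_le _ _), h_monic (Multiset.filter_le _ _),
    by rw [← Multiset.prod_add, Multiset.filter_add_not, hF_prod], ?_, ?_⟩
  · intro x hx
    obtain ⟨g, hg, hxg⟩ := h_minpoly (Multiset.filter_le _ _) hx
    obtain ⟨y, hyg, hy⟩ := (Multiset.mem_filter.mp hg).2
    exact hQ y x (hyg.trans hxg.symm) hy
  · intro x hx hQx
    obtain ⟨g, hg, hxg⟩ := h_minpoly (Multiset.filter_le _ _) hx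
    exact (Multiset.mem_filter.mp hg).2 ⟨x, hxg, hQx⟩

theorem Polynomial.isCoprime_of_forall_mem_aroots_notMem [IsAlgClosed L] {q r : K[X]}
    (hq : q ≠ 0) (hr : r ≠ 0) (h : ∀ x ∈ q.aroots L, x ∉ r.aroots L) : IsCoprime q r := by
  rw [isCoprime_iff_aeval_ne_zero_of_isAlgClosed K L]
  intro x
  by_contra! hx
  exact h x (mem_aroots.mpr ⟨hq, hx.1⟩) (mem_aroots.mpr ⟨hr, hx.2⟩)

end

theorem Polynomial.isCompl_ker_aeval_of_isCoprime {R M : Type*} [CommRing R] [AddCommGroup M]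
    [Module R M] (f : M →ₗ[R] M) {p q : R[X]} (hpq : IsCoprime p q) (h : aeval f (p * q) = 0) :
    IsCompl (LinearMap.ker (aeval f p)) (LinearMap.ker (aeval f q)) :=
  ⟨disjoint_ker_aeval_of_isCoprime f hpq, codisjoint_iff.mpr <| by
    rw [sup_ker_aeval_eq_ker_aeval_mul_of_coprime f hpq, h, LinearMap.ker_zero]⟩

/-- Slope decomposition: for a real number `s`, the characteristic
polynomial of `f` factors as `χ_f = χ_Big ⬝ χ_Small` over `K`, where the roots of `χ_Big`
in an algebraic closure have valuation `< s` and those of `χ_Small` have valuation `≥ s`,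
and `V` decomposes as `V = ker(χ_Big(f)) ⊕ ker(χ_Small(f))`. -/
theorem slope_decomposition
    {K : Type*} [Field K] [Valued K ℝ≥0] [CompleteSpace K]
    (π : K) (hπ : IsUniformizer K π)
    (w : Valuation (AlgebraicClosure K) ℝ≥0)
    (hw : ∀ x : K, w (algebraMap K (AlgebraicClosure K) x) = Valued.v x)
    {V : Type*} [AddCommGroup V] [Module K V] [FiniteDimensional K V]
    (f : V →ₗ[K] V) (s : ℝ) :
    ∃ χBig χSmall : Polynomial K,
      χBig.Monic ∧ χSmall.Monic ∧
      LinearMap.charpoly f = χBig * χSmall ∧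
      (∀ ρ ∈ (χBig.map (algebraMap K (AlgebraicClosure K))).roots,
        ρ ≠ 0 ∧ addValOf π w ρ < s) ∧
      (∀ ρ ∈ (χSmall.map (algebraMap K (AlgebraicClosure K))).roots,
        ρ = 0 ∨ s ≤ addValOf π w ρ) ∧
      IsCompl (LinearMap.ker (Polynomial.aeval f χBig))
              (LinearMap.ker (Polynomial.aeval f χSmall)) := by
  have : (Valued.v : Valuation K ℝ≥0).IsNontrivial := ⟨⟨π, hπ.1, hπ.2.1.ne⟩⟩
  let Q : AlgebraicClosure K → Prop := fun ρ => ρ ≠ 0 ∧ addValOf π w ρ < s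
  have hQ (x y : AlgebraicClosure K) (hxy : minpoly K x = minpoly K y) : Q x → Q y := by
    simp only [Q, addValOf, ← w.ne_zero_iff, w.eq_of_minpoly_eq hw hxy, imp_self]
  obtain ⟨χBig, χSmall, hBig, hSmall, hχ, hBigQ, hSmallQ⟩ :=
    (LinearMap.charpoly_monic f).exists_mul_eq_of_minpoly_invariant Q hQ
  have hcop : IsCoprime χBig χSmall :=
    isCoprime_of_forall_mem_aroots_notMem hBig.ne_zero hSmall.ne_zero fun ρ hρ hρ' =>
      hSmallQ ρ hρ' (hBigQ ρ hρ)
  refine ⟨χBig, χSmall, hBig, hSmall, hχ, hBigQ, fun ρ hρ => ?_,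
    isCompl_ker_aeval_of_isCoprime f hcop (by rw [← hχ, LinearMap.aeval_self_charpoly])⟩
  exact or_iff_not_imp_left.mpr fun hρ0 => not_lt.mp fun hρs => hSmallQ ρ hρ ⟨hρ0, hρs⟩
end

section
/- Let K be a complete discretely valued field, V a finite-dimensional K-vector space, f : V → V a K-linear endomorphism, and L ⊆ V a finitely generated K°-submodule that spans V as a K-vector space. Then the saturation of L under f satisfies Sat_f(L) = Big_0(f) + L + f(L) + ⋯ + f^{dim V − 1}(L), where Big_0(f) is the sum of generalized eigenspaces of f for eigenvalues of negative valuation. -/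
/-!
By Bézout, `V = Big₀(f) ⊕ Small₀(f)`. The roots of `χSmall` have `w ≤ 1`, hence its
coefficients are integral, and for `s ∈ Small₀(f)` every `f^k s` stays in the `K°`-span of
`s, f s, …, f^(deg χSmall - 1) s`; writing `l ∈ L` as `b + s` puts every `f^k l` into
`Big₀(f) + L + ⋯ + f^(dim V - 1)(L)`.

The roots of `χBig` have `w > 1`, so its constant coefficient strictly dominates all others.
On `Big₀(f)` this makes `f` invertible, with inverse `u` a polynomial in `f` whose coefficients
lie in the maximal ideal `π K°`. For `x ∈ Big₀(f)` the lattice `N` spanned by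
`x, f x, …, f^d x` then satisfies `u^(d+1) N ⊆ π N`, so `u^n x ∈ L` for large `n` and
`x = f^n (u^n x) ∈ Sat_f(L)`.
-/

open scoped NNReal

/-- The ring of integers `K°` acts on any `K`-vector space. -/
noncomputable instance moduleInt {K : Type*} [Field K] [Valued K ℝ≥0]
    {V : Type*} [AddCommGroup V] [Module K V] :
    Module (Valued.v.integer : Subring K) V :=
  Module.compHom V (Valued.v.integer : Subring K).subtype

/-- The scalar tower `K° → K → V` (found automatically by the older Mathlib). -/
instance isScalarTowerInt {K : Type*} [Field K] [Valued K ℝ≥0]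
    {V : Type*} [AddCommGroup V] [Module K V] :
    IsScalarTower (Valued.v.integer : Subring K) K V :=
  ⟨fun a b v => mul_smul (a : K) b v⟩

/-- A `K`-linear endomorphism, viewed as `K°`-linear. -/
noncomputable def restrictO {K : Type*} [Field K] [Valued K ℝ≥0]
    {V : Type*} [AddCommGroup V] [Module K V] (f : V →ₗ[K] V) :
    V →ₗ[(Valued.v.integer : Subring K)] V where
  toFun := f
  map_add' := f.map_add
  map_smul' := fun c x => f.map_smul (c : K) x

open Polynomial Pointwise Filter

section ProdXSubC

variable {A Γ₀ : Type*} [CommRing A] [LinearOrderedCommGroupWithZero Γ₀] (w : Valuation A Γ₀)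

theorem Valuation.coeff_prod_X_sub_C_le_one {s : Multiset A} (hs : ∀ a ∈ s, w a ≤ 1) (i : ℕ) :
    w ((s.map fun a => X - C a).prod.coeff i) ≤ 1 := by
  induction s using Multiset.induction generalizing i with
  | empty => rcases i with _ | i <;> simp [coeff_one]
  | cons a s ih =>
    have ha := hs a (Multiset.mem_cons_self a s)
    have ih := ih fun b hb => hs b (Multiset.mem_cons_of_mem hb)
    rw [Multiset.map_cons, Multiset.prod_cons, mul_comm]
    rcases i with _ | i
    · simpa using mul_le_one' (ih 0) ha
    · rw [coeff_mul_X_sub_C]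
      exact (w.map_sub _ _).trans (max_le (ih i) (by simpa using mul_le_one' (ih (i + 1)) ha))

theorem Valuation.coeff_prod_X_sub_C_lt_coeff_zero {s : Multiset A} (hs : ∀ a ∈ s, 1 < w a)
    {i : ℕ} (hi : 0 < i) :
    w ((s.map fun a => X - C a).prod.coeff i) < w ((s.map fun a => X - C a).prod.coeff 0) := by
  induction s using Multiset.induction generalizing i with
  | empty => simp [coeff_one, hi.ne']
  | cons a s ih =>
    have ha := hs a (Multiset.mem_cons_self a s)
    have ih := @ih fun b hb => hs b (Multiset.mem_cons_of_mem hb)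
    set c := fun j => (s.map fun a => X - C a).prod.coeff j
    have hc0 : 0 < w (c 0) := lt_of_le_of_lt zero_le (ih one_pos)
    have hlt : ∀ j, w (c j) < w (c 0) * w a := fun j =>
      lt_of_le_of_lt (by rcases j with _ | j; exacts [le_rfl, (ih j.succ_pos).le])
        (lt_mul_of_one_lt_right hc0 ha)
    obtain ⟨i, rfl⟩ := Nat.exists_eq_add_one_of_ne_zero hi.ne'
    rw [Multiset.map_cons, Multiset.prod_cons, mul_comm, coeff_mul_X_sub_C, mul_coeff_zero]
    simp only [coeff_sub, coeff_X_zero, coeff_C_zero, zero_sub, Valuation.map_neg, map_mul]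
    exact lt_of_le_of_lt (w.map_sub _ _) (max_lt (hlt i)
      (by rw [map_mul]; exact mul_lt_mul_of_pos_right (ih i.succ_pos) (zero_lt_one.trans ha)))

end ProdXSubC

section RootsAndCoefficients

variable {K L Γ₀ : Type*} [Field K] [Field L] [IsAlgClosed L] [Algebra K L]
  [LinearOrderedCommGroupWithZero Γ₀] {v : Valuation K Γ₀} {w : Valuation L Γ₀}

theorem Polynomial.Monic.valuation_coeff_le_one (hw : ∀ x : K, w (algebraMap K L x) = v x)
    {p : K[X]} (hp : p.Monic) (hroots : ∀ ρ ∈ (p.map (algebraMap K L)).roots, w ρ ≤ 1)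
    (i : ℕ) : v (p.coeff i) ≤ 1 := by
  rw [← hw, ← coeff_map, (IsAlgClosed.splits _).eq_prod_roots_of_monic (hp.map _)]
  exact w.coeff_prod_X_sub_C_le_one hroots i

theorem Polynomial.Monic.valuation_coeff_lt_coeff_zero (hw : ∀ x : K, w (algebraMap K L x) = v x)
    {p : K[X]} (hp : p.Monic) (hroots : ∀ ρ ∈ (p.map (algebraMap K L)).roots, 1 < w ρ)
    {i : ℕ} (hi : 0 < i) : v (p.coeff i) < v (p.coeff 0) := by
  rw [← hw, ← hw, ← coeff_map, ← coeff_map,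
    (IsAlgClosed.splits _).eq_prod_roots_of_monic (hp.map _)]
  exact w.coeff_prod_X_sub_C_lt_coeff_zero hroots hi

theorem Polynomial.isCoprime_of_forall_mem_roots_not_mem_roots {p q : K[X]}
    (hp : p ≠ 0) (hq : q ≠ 0)
    (h : ∀ ρ ∈ (p.map (algebraMap K L)).roots, ρ ∉ (q.map (algebraMap K L)).roots) :
    IsCoprime p q := by
  refine (isCoprime_iff_aeval_ne_zero_of_isAlgClosed K L p q).2 fun ρ => ?_
  by_contra! hρ
  exact h ρ ((mem_roots_map hp).2 hρ.1) ((mem_roots_map hq).2 hρ.2)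

end RootsAndCoefficients

section Uniformizer

variable {K : Type*} [Field K] [Valued K ℝ≥0] {π : K}

theorem IsUniformizer.valuation_le_of_lt_one (hπ : IsUniformizer K π) {c : K}
    (hc : Valued.v c < 1) : Valued.v c ≤ Valued.v π := by
  obtain ⟨hπ0, hπ1, hdisc⟩ := hπ
  rcases eq_or_ne c 0 with rfl | hc0
  · simp
  obtain ⟨k, hk⟩ := hdisc c hc0
  have hanti := zpow_right_strictAnti₀ (pos_iff_ne_zero.2 hπ0) hπ1
  have hk0 : 0 < k := hanti.lt_iff_gt.1 (by rwa [zpow_zero, ← hk])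
  simpa [hk] using hanti.antitone hk0

variable {A : Type*} [Ring A] {w : Valuation A ℝ≥0} {ρ : A}

theorem one_lt_of_addValOf_neg (hπ0 : Valued.v π ≠ 0) (hπ1 : Valued.v π < 1)
    (h : addValOf π w ρ < 0) : 1 < w ρ := by
  rcases eq_or_ne (w ρ) 0 with h0 | h0
  · simp [addValOf, h0] at h
  exact_mod_cast (Real.logb_neg_iff_of_base_lt_one (NNReal.coe_pos.2 (pos_iff_ne_zero.2 hπ0))
    (by exact_mod_cast hπ1) (NNReal.coe_pos.2 (pos_iff_ne_zero.2 h0))).1 h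

theorem le_one_of_addValOf_nonneg (hπ0 : Valued.v π ≠ 0) (hπ1 : Valued.v π < 1)
    (h : 0 ≤ addValOf π w ρ) : w ρ ≤ 1 := by
  rcases eq_or_ne (w ρ) 0 with h0 | h0
  · simp [h0]
  exact_mod_cast (Real.logb_nonneg_iff_of_base_lt_one (NNReal.coe_pos.2 (pos_iff_ne_zero.2 hπ0))
    (by exact_mod_cast hπ1) (NNReal.coe_pos.2 (pos_iff_ne_zero.2 h0))).1 h

end Uniformizer

section Contraction

variable {R M : Type*} [CommRing R] [AddCommGroup M] [Module R M]

namespace Submodule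

theorem map_pow_mul_le_pow_smul {N : Submodule R M} {u : Module.End R M} {ϖ : R} {D : ℕ}
    (h : N.map (u ^ D) ≤ ϖ • N) (t : ℕ) : N.map (u ^ (D * t)) ≤ ϖ ^ t • N := by
  induction t with
  | zero => rw [mul_zero, pow_zero, pow_zero, one_smul, Module.End.one_eq_id, map_id]
  | succ t ih =>
    rw [mul_add_one, pow_add, Module.End.mul_eq_comp, map_comp, pow_succ', mul_smul]
    calc _ ≤ (ϖ • N).map (u ^ (D * t)) := map_mono h
      _ = ϖ • N.map (u ^ (D * t)) := map_pointwise_smul _ _ _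
      _ ≤ ϖ • ϖ ^ t • N := smul_mono_right ϖ ih

theorem map_pow_le_of_map_le {N : Submodule R M} {u : Module.End R M} (h : N.map u ≤ N)
    (k : ℕ) : N.map (u ^ k) ≤ N := by
  induction k with
  | zero => rw [pow_zero, Module.End.one_eq_id, map_id]
  | succ k ih =>
    rw [pow_succ, Module.End.mul_eq_comp, map_comp]
    exact (map_mono h).trans ih

theorem map_pow_span_le_smul_of_shift {u : Module.End R M} {e : ℕ → M} {ϖ : R} {D : ℕ}
    (hshift : ∀ j, u (e (j + 1)) = e j)
    (h0 : u (e 0) ∈ ϖ • span R (Set.range fun j : Fin D => e j)) :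
    (span R (Set.range fun j : Fin D => e j)).map (u ^ D)
      ≤ ϖ • span R (Set.range fun j : Fin D => e j) := by
  set N := span R (Set.range fun j : Fin D => e j)
  have hN : N.map u ≤ N := by
    rw [map_span_le]
    rintro _ ⟨⟨_ | j, hj⟩, rfl⟩
    · exact smul_le_self_of_tower ϖ N h0
    · rw [hshift]
      exact subset_span ⟨⟨j, by omega⟩, rfl⟩
  have hiter : ∀ j, (u ^ j) (e j) = e 0 := by
    intro j
    induction j with
    | zero => rfl
    | succ j ih => rw [pow_succ, Module.End.mul_apply, hshift, ih]
  rw [map_span_le]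
  rintro _ ⟨⟨j, hj⟩, rfl⟩
  have hD : u ^ D = u ^ (D - 1 - j) * u * u ^ j := by
    rw [← pow_succ, ← pow_add]
    congr 1
    omega
  rw [hD, Module.End.mul_apply, Module.End.mul_apply, hiter]
  have := mem_map_of_mem (f := u ^ (D - 1 - j)) h0
  rw [map_pointwise_smul] at this
  exact smul_mono_right ϖ (map_pow_le_of_map_le hN _) this

end Submodule

end Contraction

section Lattice

variable {K : Type*} [Field K] [Valued K ℝ≥0] {V : Type*} [AddCommGroup V] [Module K V]

local notation "𝒪" => (Valued.v.integer : Subring K)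

theorem restrictO_pow_apply (f : V →ₗ[K] V) (k : ℕ) (x : V) :
    (restrictO f ^ k) x = (f ^ k) x := by
  induction k generalizing x with
  | zero => rfl
  | succ k ih => rw [pow_succ, pow_succ, Module.End.mul_apply, Module.End.mul_apply, ih]; rfl

theorem eventually_pow_smul_mem {ϖ : 𝒪} (hϖ : Valued.v (ϖ : K) < 1) {L : Submodule 𝒪 V}
    (hL : Submodule.span K (L : Set V) = ⊤) (x : V) : ∀ᶠ n in atTop, ϖ ^ n • x ∈ L := by
  let S : Submodule K V :=
    { carrier := {x | ∀ᶠ n in atTop, ϖ ^ n • x ∈ L}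
      add_mem' := fun hx hy => (hx.and hy).mono fun n h => by
        rw [smul_add]
        exact L.add_mem h.1 h.2
      zero_mem' := Eventually.of_forall fun n => by
        rw [smul_zero]
        exact L.zero_mem
      smul_mem' := fun c x hx => by
        have hlim := (tendsto_pow_atTop_nhds_zero_of_lt_one zero_le hϖ).mul_const (Valued.v c)
        rw [zero_mul] at hlim
        obtain ⟨t, ht⟩ := (hlim.eventually_lt_const zero_lt_one).exists
        filter_upwards [(tendsto_sub_atTop_nat t).eventually hx, eventually_ge_atTop t]
          with n hn htn
        obtain ⟨k, rfl⟩ := exists_add_of_le htn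
        have hc : Valued.v ((ϖ : K) ^ t * c) ≤ 1 := by simpa using ht.le
        have : ϖ ^ (t + k) • c • x = (⟨(ϖ : K) ^ t * c, hc⟩ : 𝒪) • ϖ ^ k • x := by
          change ((ϖ ^ (t + k) : 𝒪) : K) • c • x = ((ϖ : K) ^ t * c) • ((ϖ ^ k : 𝒪) : K) • x
          rw [smul_smul, smul_smul]
          push_cast
          ring_nf
        rw [this]
        exact L.smul_mem _ (by simpa using hn) }
  have hLS : Submodule.span K (L : Set V) ≤ S :=
    Submodule.span_le.2 fun x hx => Eventually.of_forall fun n => L.smul_mem _ hx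
  exact hLS (hL ▸ Submodule.mem_top)

theorem eventually_pow_smul_le {ϖ : 𝒪} (hϖ : Valued.v (ϖ : K) < 1) {L : Submodule 𝒪 V}
    (hL : Submodule.span K (L : Set V) = ⊤) {N : Submodule 𝒪 V} (hN : N.FG) :
    ∀ᶠ n in atTop, ϖ ^ n • N ≤ L := by
  obtain ⟨s, rfl⟩ := hN
  filter_upwards [(eventually_all_finset s).2
    fun x _ => eventually_pow_smul_mem hϖ hL x] with n hn
  rw [Submodule.smul_span, Submodule.span_le]
  rintro _ ⟨x, hx, rfl⟩
  exact hn x hx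

end Lattice

section PolynomialAction

variable {R M : Type*} [CommRing R] [AddCommGroup M] [Module R M] (f : Module.End R M)

theorem Polynomial.aeval_apply_aeval_apply_comm (p q : R[X]) (x : M) :
    aeval f p (aeval f q x) = aeval f q (aeval f p x) := by
  rw [← Module.End.mul_apply, ← map_mul, mul_comm, map_mul, Module.End.mul_apply]

theorem Polynomial.pow_apply_mem_ker_aeval {p : R[X]} {x : M}
    (hx : x ∈ LinearMap.ker (aeval f p)) (k : ℕ) : (f ^ k) x ∈ LinearMap.ker (aeval f p) := by
  rw [LinearMap.mem_ker, ← aeval_X_pow (R := R), aeval_apply_aeval_apply_comm, hx, map_zero]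

theorem Polynomial.aeval_apply_apply_eq_of_rightInverse {p Q : R[X]}
    (hfQ : ∀ y ∈ LinearMap.ker (aeval f p), f (aeval f Q y) = y) {x : M}
    (hx : x ∈ LinearMap.ker (aeval f p)) : aeval f Q (f x) = x := by
  have hcomm := aeval_apply_aeval_apply_comm f Q X x
  rw [aeval_X] at hcomm
  rw [hcomm, hfQ x hx]

theorem Polynomial.pow_apply_aeval_pow_apply_eq_of_rightInverse {p Q : R[X]}
    (hfQ : ∀ y ∈ LinearMap.ker (aeval f p), f (aeval f Q y) = y) (n : ℕ) {x : M}
    (hx : x ∈ LinearMap.ker (aeval f p)) : (f ^ n) ((aeval f Q ^ n) x) = x := by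
  induction n generalizing x with
  | zero => rfl
  | succ n ih =>
    have hQx : aeval f Q x ∈ LinearMap.ker (aeval f p) := by
      rw [LinearMap.mem_ker, aeval_apply_aeval_apply_comm, LinearMap.mem_ker.1 hx, map_zero]
    rw [pow_succ' f, pow_succ, Module.End.mul_apply, Module.End.mul_apply, ih hQx, hfQ x hx]

end PolynomialAction

section ValuationPolynomial

variable {K Γ₀ : Type*} [Field K] [LinearOrderedCommGroupWithZero Γ₀] {v : Valuation K Γ₀}

theorem Polynomial.valuation_coeff_modByMonic_le_one {p q : K[X]} (hp : ∀ i, v (p.coeff i) ≤ 1)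
    (hq : q.Monic) (hq' : ∀ i, v (q.coeff i) ≤ 1) (i : ℕ) : v ((p %ₘ q).coeff i) ≤ 1 := by
  have lifts : ∀ r : K[X], (∀ i, v (r.coeff i) ≤ 1) → r ∈ lifts (algebraMap v.integer K) :=
    fun r hr => (lifts_iff_coeff_lifts r).2 fun n => ⟨⟨_, hr n⟩, rfl⟩
  obtain ⟨p', rfl⟩ := (mem_lifts p).1 (lifts p hp)
  obtain ⟨q', rfl, -, hq'm⟩ := lifts_and_natDegree_eq_and_monic (lifts q hq') hq
  rw [← map_modByMonic _ hq'm, coeff_map]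
  exact ((p' %ₘ q').coeff i).2

variable {V : Type*} [AddCommGroup V] [Module K V] (f : V →ₗ[K] V)

theorem exists_aeval_rightInverse_on_ker {p : K[X]}
    (hdom : ∀ j, 0 < j → v (p.coeff j) < v (p.coeff 0)) :
    ∃ Q : K[X], Q.degree < p.natDegree ∧ (∀ i, v (Q.coeff i) < 1) ∧
      ∀ x ∈ LinearMap.ker (aeval f p), f (aeval f Q x) = x := by
  set a₀ := p.coeff 0
  have ha₀ : a₀ ≠ 0 := fun h => by simpa [h] using hdom 1 one_pos
  have hp : p ≠ 0 := fun h => ha₀ (by simp [a₀, h])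
  refine ⟨-(C a₀⁻¹ * p.divX), ?_, fun i => ?_, fun x hx => ?_⟩
  · rw [degree_neg, degree_C_mul (inv_ne_zero ha₀)]
    exact (degree_divX_lt hp).trans_le degree_le_natDegree
  · rw [coeff_neg, coeff_C_mul, coeff_divX, Valuation.map_neg, map_mul, map_inv₀, inv_mul_eq_div]
    exact (div_lt_one₀ (pos_of_gt (hdom _ i.succ_pos))).2 (hdom _ i.succ_pos)
  · have hC : C a₀⁻¹ * C a₀ = 1 := by rw [← C_mul, inv_mul_cancel₀ ha₀, C_1]
    have hXQ : X * -(C a₀⁻¹ * p.divX) = 1 - C a₀⁻¹ * p := by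
      linear_combination (-C a₀⁻¹) * X_mul_divX_add p + hC
    have hfQ : f (aeval f (-(C a₀⁻¹ * p.divX)) x) = aeval f (X * -(C a₀⁻¹ * p.divX)) x := by
      rw [map_mul, aeval_X, Module.End.mul_apply]
    rw [hfQ, hXQ, map_sub, map_one,
      map_mul, aeval_C, LinearMap.sub_apply, Module.End.mul_apply, LinearMap.mem_ker.1 hx,
      map_zero, Module.End.one_apply, sub_zero]

end ValuationPolynomial

section Saturation

variable {K : Type*} [Field K] [Valued K ℝ≥0] {V : Type*} [AddCommGroup V] [Module K V]
  (f : V →ₗ[K] V)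

local notation "𝒪" => (Valued.v.integer : Subring K)

noncomputable def saturation (L : Submodule 𝒪 V) : Submodule 𝒪 V :=
  ⨆ k : ℕ, L.map (restrictO f ^ k)

theorem pow_apply_mem_saturation {L : Submodule 𝒪 V} {y : V} (hy : y ∈ L) (k : ℕ) :
    (f ^ k) y ∈ saturation f L := by
  rw [← restrictO_pow_apply]
  exact Submodule.mem_iSup_of_mem k (Submodule.mem_map_of_mem hy)

theorem saturation_le_iff {L N : Submodule 𝒪 V} :
    saturation f L ≤ N ↔ ∀ k, ∀ y ∈ L, (f ^ k) y ∈ N := by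
  rw [saturation, iSup_le_iff]
  simp only [Submodule.map_le_iff_le_comap]
  simp only [SetLike.le_def, Submodule.mem_comap, restrictO_pow_apply]

theorem aeval_apply_mem_span {Q : K[X]} (hQ : ∀ i, Valued.v (Q.coeff i) ≤ 1) {D : ℕ}
    (hD : Q.degree < D) (x : V) :
    aeval f Q x ∈ Submodule.span 𝒪 (Set.range fun j : Fin D => (f ^ (j : ℕ)) x) := by
  rw [aeval_eq_sum_range, LinearMap.sum_apply]
  refine Submodule.sum_mem _ fun i _ => ?_
  rw [LinearMap.smul_apply]
  by_cases hi : Q.coeff i = 0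
  · rw [hi, zero_smul]
    exact Submodule.zero_mem _
  · have hiD : i < D := by exact_mod_cast (le_degree_of_ne_zero hi).trans_lt hD
    exact Submodule.smul_mem _ (⟨Q.coeff i, hQ i⟩ : 𝒪) (Submodule.subset_span ⟨⟨i, hiD⟩, rfl⟩)

theorem aeval_apply_mem_smul_span {ϖ : 𝒪} (hϖ : IsUniformizer K ϖ) {Q : K[X]}
    (hQ : ∀ i, Valued.v (Q.coeff i) < 1) {D : ℕ} (hD : Q.degree < D) (x : V) :
    aeval f Q x ∈ ϖ • Submodule.span 𝒪 (Set.range fun j : Fin D => (f ^ (j : ℕ)) x) := by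
  have hϖ0 : (ϖ : K) ≠ 0 := fun h => hϖ.1 (by rw [h, map_zero])
  have hQ' : aeval f Q x = ϖ • aeval f (C (ϖ : K)⁻¹ * Q) x := by
    change _ = (ϖ : K) • aeval f (C (ϖ : K)⁻¹ * Q) x
    rw [map_mul, aeval_C, Module.End.mul_apply, Module.algebraMap_end_apply, smul_smul,
      mul_inv_cancel₀ hϖ0, one_smul]
  rw [hQ']
  refine Submodule.smul_mem_pointwise_smul _ _ _ (aeval_apply_mem_span f (fun i => ?_) ?_ x)
  · rw [coeff_C_mul, map_mul, map_inv₀, inv_mul_eq_div]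
    exact (div_le_one₀ (pos_iff_ne_zero.2 hϖ.1)).2 (hϖ.valuation_le_of_lt_one (hQ i))
  · rwa [degree_C_mul (inv_ne_zero hϖ0)]

theorem pow_apply_mem_span_of_aeval_eq_zero {q : K[X]} (hq : q.Monic)
    (hq' : ∀ i, Valued.v (q.coeff i) ≤ 1) {x : V} (hx : aeval f q x = 0) (k : ℕ) :
    (f ^ k) x ∈ Submodule.span 𝒪 (Set.range fun j : Fin q.natDegree => (f ^ (j : ℕ)) x) := by
  have hmod : (f ^ k) x = aeval f (X ^ k %ₘ q) x := by
    calc (f ^ k) x = aeval f (X ^ k %ₘ q + q * (X ^ k /ₘ q)) x := by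
          rw [modByMonic_add_div, aeval_X_pow]
      _ = aeval f (X ^ k %ₘ q) x := by
          rw [map_add, LinearMap.add_apply, mul_comm, map_mul, Module.End.mul_apply, hx,
            map_zero, add_zero]
  have hXk : ∀ i, Valued.v ((X ^ k : K[X]).coeff i) ≤ 1 := fun i => by
    rw [coeff_X_pow]
    split_ifs <;> simp
  rw [hmod]
  exact aeval_apply_mem_span f (valuation_coeff_modByMonic_le_one hXk hq hq')
    ((degree_modByMonic_lt _ hq).trans_eq (degree_eq_natDegree hq.ne_zero)) x

theorem ker_aeval_le_saturation {ϖ : 𝒪} (hϖ : IsUniformizer K ϖ) {L : Submodule 𝒪 V}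
    (hL : Submodule.span K (L : Set V) = ⊤) {p : K[X]}
    (hdom : ∀ j, 0 < j → Valued.v (p.coeff j) < Valued.v (p.coeff 0)) :
    (LinearMap.ker (aeval f p)).restrictScalars 𝒪 ≤ saturation f L := by
  obtain ⟨Q, hQdeg, hQ, hfQ⟩ := exists_aeval_rightInverse_on_ker f hdom
  set u := aeval f Q
  intro x hx
  set D := p.natDegree + 1
  set N := Submodule.span 𝒪 (Set.range fun j : Fin D => (f ^ (j : ℕ)) x)
  have hcontr : N.map (restrictO u ^ D) ≤ ϖ • N :=
    Submodule.map_pow_span_le_smul_of_shift (e := fun j => (f ^ j) x)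
      (fun j => by
        change u ((f ^ (j + 1)) x) = (f ^ j) x
        rw [pow_succ', Module.End.mul_apply,
          aeval_apply_apply_eq_of_rightInverse f hfQ (pow_apply_mem_ker_aeval f hx j)])
      (aeval_apply_mem_smul_span f hϖ hQ
        (hQdeg.trans (by exact_mod_cast p.natDegree.lt_succ_self)) x)
  have hNfg : N.FG := Submodule.fg_span (Set.finite_range _)
  obtain ⟨t, ht⟩ := (eventually_pow_smul_le hϖ.2.1 hL hNfg).exists
  have huL : (u ^ (D * t)) x ∈ L := by
    rw [← restrictO_pow_apply]
    exact ht (Submodule.map_pow_mul_le_pow_smul hcontr t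
      (Submodule.mem_map_of_mem (Submodule.subset_span ⟨0, by simp⟩)))
  rw [← pow_apply_aeval_pow_apply_eq_of_rightInverse f hfQ (D * t) hx]
  exact pow_apply_mem_saturation f huL _

theorem saturation_le_ker_aeval_sup {p q : K[X]} (hq : q.Monic)
    (hq' : ∀ i, Valued.v (q.coeff i) ≤ 1)
    (hpq : LinearMap.ker (aeval f p) ⊔ LinearMap.ker (aeval f q) = ⊤) {n : ℕ}
    (hn : q.natDegree ≤ n) (L : Submodule 𝒪 V) :
    saturation f L ≤ (LinearMap.ker (aeval f p)).restrictScalars 𝒪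
      ⊔ ⨆ k : Fin n, L.map (restrictO f ^ (k : ℕ)) := by
  set T := (LinearMap.ker (aeval f p)).restrictScalars 𝒪
      ⊔ ⨆ k : Fin n, L.map (restrictO f ^ (k : ℕ))
  have hLT : ∀ k < n, ∀ y ∈ L, (f ^ k) y ∈ T := fun k hk y hy => by
    rw [← restrictO_pow_apply]
    exact Submodule.mem_sup_right
      (Submodule.mem_iSup_of_mem ⟨k, hk⟩ (Submodule.mem_map_of_mem hy))
  rw [saturation_le_iff]
  intro k l hl
  obtain ⟨b, hb, s, hs, rfl⟩ := Submodule.mem_sup.1 (hpq ▸ Submodule.mem_top (x := l))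
  have hbT : ∀ j, (f ^ j) b ∈ T := fun j =>
    Submodule.mem_sup_left (pow_apply_mem_ker_aeval f hb j)
  have hsT : Submodule.span 𝒪 (Set.range fun j : Fin q.natDegree => (f ^ (j : ℕ)) s) ≤ T := by
    rw [Submodule.span_le]
    rintro _ ⟨j, rfl⟩
    have hs_eq : (f ^ (j : ℕ)) s = (f ^ (j : ℕ)) (b + s) - (f ^ (j : ℕ)) b := by
      rw [map_add, add_sub_cancel_left]
    change (f ^ (j : ℕ)) s ∈ T
    rw [hs_eq]
    exact T.sub_mem (hLT j (j.2.trans_le hn) _ hl) (hbT j)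
  rw [map_add]
  exact T.add_mem (hbT k) (hsT (pow_apply_mem_span_of_aeval_eq_zero f hq hq' hs k))

end Saturation

theorem saturation_eq_big_add_partial_sums_general
    {K : Type*} [Field K] [Valued K ℝ≥0]
    (π : K) (hπ : IsUniformizer K π)
    (w : Valuation (AlgebraicClosure K) ℝ≥0)
    (hw : ∀ x : K, w (algebraMap K (AlgebraicClosure K) x) = Valued.v x)
    {V : Type*} [AddCommGroup V] [Module K V] [FiniteDimensional K V]
    (f : V →ₗ[K] V)
    (χBig χSmall : Polynomial K)
    (hBmonic : χBig.Monic) (hSmonic : χSmall.Monic)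
    (hfact : LinearMap.charpoly f = χBig * χSmall)
    (hBroots : ∀ ρ ∈ (χBig.map (algebraMap K (AlgebraicClosure K))).roots,
      ρ ≠ 0 ∧ addValOf π w ρ < 0)
    (hSroots : ∀ ρ ∈ (χSmall.map (algebraMap K (AlgebraicClosure K))).roots,
      ρ = 0 ∨ 0 ≤ addValOf π w ρ)
    (L : Submodule (Valued.v.integer : Subring K) V)
    (hspan : Submodule.span K (L : Set V) = ⊤) :
    (⨆ k : ℕ, Submodule.map ((restrictO f) ^ k) L)
      = Submodule.restrictScalars (Valued.v.integer : Subring K)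
          (LinearMap.ker (Polynomial.aeval f χBig))
        ⊔ (⨆ k : Fin (Module.finrank K V), Submodule.map ((restrictO f) ^ (k : ℕ)) L) := by
  have hB : ∀ ρ ∈ (χBig.map (algebraMap K (AlgebraicClosure K))).roots, 1 < w ρ :=
    fun ρ hρ => one_lt_of_addValOf_neg hπ.1 hπ.2.1 (hBroots ρ hρ).2
  have hS : ∀ ρ ∈ (χSmall.map (algebraMap K (AlgebraicClosure K))).roots, w ρ ≤ 1 :=
    fun ρ hρ => (hSroots ρ hρ).elim (fun h => by simp [h])
      (le_one_of_addValOf_nonneg hπ.1 hπ.2.1)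
  have hcop : IsCoprime χBig χSmall :=
    isCoprime_of_forall_mem_roots_not_mem_roots (L := AlgebraicClosure K) hBmonic.ne_zero
      hSmonic.ne_zero fun ρ hρB hρS => (hB ρ hρB).not_ge (hS ρ hρS)
  have hker : LinearMap.ker (aeval f χBig) ⊔ LinearMap.ker (aeval f χSmall) = ⊤ := by
    rw [sup_ker_aeval_eq_ker_aeval_mul_of_coprime f hcop, ← hfact, LinearMap.aeval_self_charpoly,
      LinearMap.ker_zero]
  have hdeg : χSmall.natDegree ≤ Module.finrank K V := by
    rw [← LinearMap.charpoly_natDegree f, hfact, hBmonic.natDegree_mul hSmonic]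
    omega
  refine le_antisymm
    (saturation_le_ker_aeval_sup f hSmonic (hSmonic.valuation_coeff_le_one hw hS) hker hdeg L)
    (sup_le ?_ (iSup_le fun k => le_iSup (fun j : ℕ => L.map (restrictO f ^ j)) k))
  exact ker_aeval_le_saturation f (ϖ := ⟨π, hπ.2.1.le⟩) hπ hspan
    fun _ => hBmonic.valuation_coeff_lt_coeff_zero hw hB

/-- If `L` is a finitely generated `K°`-submodule of `V` spanning `V`
over `K`, then `Sat_f(L) = Big_0(f) + L + f(L) + ⋯ + f^(dim V − 1)(L)`, where
`Big_0(f) = ker(χ_Big(f))` for the factor `χ_Big` of the characteristic polynomial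
gathering the roots of negative valuation. -/
theorem saturation_eq_big_add_partial_sums
    {K : Type*} [Field K] [Valued K ℝ≥0] [CompleteSpace K]
    (π : K) (hπ : IsUniformizer K π)
    (w : Valuation (AlgebraicClosure K) ℝ≥0)
    (hw : ∀ x : K, w (algebraMap K (AlgebraicClosure K) x) = Valued.v x)
    {V : Type*} [AddCommGroup V] [Module K V] [FiniteDimensional K V]
    (f : V →ₗ[K] V)
    (χBig χSmall : Polynomial K)
    (hBmonic : χBig.Monic) (hSmonic : χSmall.Monic)
    (hfact : LinearMap.charpoly f = χBig * χSmall)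
    (hBroots : ∀ ρ ∈ (χBig.map (algebraMap K (AlgebraicClosure K))).roots,
      ρ ≠ 0 ∧ addValOf π w ρ < 0)
    (hSroots : ∀ ρ ∈ (χSmall.map (algebraMap K (AlgebraicClosure K))).roots,
      ρ = 0 ∨ 0 ≤ addValOf π w ρ)
    (L : Submodule (Valued.v.integer : Subring K) V) (hL : L.FG)
    (hspan : Submodule.span K (L : Set V) = ⊤) :
    (⨆ k : ℕ, Submodule.map ((restrictO f) ^ k) L)
      = Submodule.restrictScalars (Valued.v.integer : Subring K)
          (LinearMap.ker (Polynomial.aeval f χBig))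
        ⊔ (⨆ k : Fin (Module.finrank K V), Submodule.map ((restrictO f) ^ (k : ℕ)) L) :=
  saturation_eq_big_add_partial_sums_general π hπ w hw f χBig χSmall hBmonic hSmonic hfact hBroots
    hSroots L hspan
end
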